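/- Let M(A) be the subcategory of split monomorphisms of a small additive category A, and őĪ : Fct(A,k-Mod) ‚Üí Fct(M(A),k-Mod) the restriction functor. Then őĪ admits a right adjoint ő≤ given by ő≤(X)(a) = Hom_{Fct(M(A),k-Mod)}(őĪ P_a, X), where P_a = k[Hom_A(a,‚ąí)], and the unit F ‚Üí ő≤őĪ(F) is a monomorphism. -/

import Mathlib

open CategoryTheory CategoryTheory.Limits

noncomputable section

variable {A : Type*} [Category A] [Preadditive A] [HasFiniteBiproducts A]
variable {D : Type*} [Category D] [Preadditive D]

/-- `t d : a ↦ a^{⊕(d+1)}` -/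
@[simps] def tFun (A : Type*) [Category A] [Preadditive A] [HasFiniteBiproducts A] (d : ℕ) :
    A ⥤ A where
  obj a := ⨁ (fun _ : Fin (d + 1) => a)
  map f := biproduct.map (fun _ => f)

/-- `u_I : id ⟶ t_d` -/
@[simps] def uNat (A : Type*) [Category A] [Preadditive A] [HasFiniteBiproducts A] (d : ℕ)
    (I : Finset (Fin (d + 1))) : 𝟭 A ⟶ tFun A d where
  app a := biproduct.lift (fun i => if i ∈ I then 𝟙 a else 0)
  naturality a b f := by
    refine biproduct.hom_ext _ _ fun j => ?_
    by_cases h : j ∈ I <;> erw [Category.assoc, Category.assoc, biproduct.lift_π, tFun_map,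
      biproduct.map_π, biproduct.lift_π_assoc] <;> simp [h]

/-- `p_I : t_d ⟶ id` -/
@[simps] def pNat (A : Type*) [Category A] [Preadditive A] [HasFiniteBiproducts A] (d : ℕ)
    (I : Finset (Fin (d + 1))) : tFun A d ⟶ 𝟭 A where
  app a := biproduct.desc (fun i => if i ∈ I then 𝟙 a else 0)
  naturality a b f := by
    refine biproduct.hom_ext' _ _ fun j => ?_
    by_cases h : j ∈ I <;> simp only [Functor.id_map, tFun_map] <;>
      erw [biproduct.ι_map_assoc, biproduct.ι_desc, biproduct.ι_desc_assoc] <;> simp [h]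

/-- the cross effect `cr_d(F) : F ⟶ τ_d F` -/
@[simps] def crNat (d : ℕ) (F : A ⥤ D) : F ⟶ tFun A d ⋙ F where
  app a := ∑ I : Finset (Fin (d + 1)), (-1 : ℤ) ^ I.card • F.map ((uNat A d I).app a)
  naturality a b f := by
    simp only [Functor.comp_map, Preadditive.comp_sum, Preadditive.sum_comp,
      Preadditive.comp_zsmul, Preadditive.zsmul_comp]
    refine Finset.sum_congr rfl (fun I _ => ?_)
    have h := (uNat A d I).naturality f
    simp only [Functor.id_map] at h
    rw [← F.map_comp, ← F.map_comp, h]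

/-- the co-cross effect `cr_d^{op}(F) : τ_d F ⟶ F` -/
@[simps] def crOpNat (d : ℕ) (F : A ⥤ D) : tFun A d ⋙ F ⟶ F where
  app a := ∑ I : Finset (Fin (d + 1)), (-1 : ℤ) ^ I.card • F.map ((pNat A d I).app a)
  naturality a b f := by
    simp only [Functor.comp_map, Preadditive.comp_sum, Preadditive.sum_comp,
      Preadditive.comp_zsmul, Preadditive.zsmul_comp]
    refine Finset.sum_congr rfl (fun I _ => ?_)
    have h := (pNat A d I).naturality f
    simp only [Functor.id_map] at h
    rw [← F.map_comp, ← F.map_comp, h]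

/-- `F` is polynomial of degree at most `d`. -/
def PolyDeg (d : ℕ) (F : A ⥤ D) : Prop := crNat d F = 0

end

section MA

variable (B : Type*) [Category B]

/-- `M(B)` : same objects as `B`, morphisms the split monomorphisms. -/
def MA := B

instance : Category (MA B) where
  Hom a b := {f : (show B from a) ⟶ (show B from b) // IsSplitMono f}
  id a := ⟨𝟙 _, inferInstance⟩
  comp f g := ⟨f.1 ≫ g.1, by haveI := f.2; haveI := g.2; infer_instance⟩
  id_comp f := Subtype.ext (Category.id_comp f.1)
  comp_id f := Subtype.ext (Category.comp_id f.1)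
  assoc f g h := Subtype.ext (Category.assoc f.1 g.1 h.1)

/-- the inclusion `M(B) ⥤ B`. -/
@[simps] def MA.incl : MA B ⥤ B where
  obj a := a
  map f := f.1

/-- `α`, the restriction functor along `M(B) ⥤ B`. -/
def alpha (k : Type) [CommRing k] : (B ⥤ ModuleCat k) ⥤ (MA B ⥤ ModuleCat k) :=
  (Functor.whiskeringLeft (MA B) B (ModuleCat k)).obj (MA.incl B)

end MA

noncomputable section

open Opposite

/-- `P_a = k[Hom_A(a,-)]`. -/
def Pa (k : Type) [CommRing k] {A : Type} [SmallCategory A] (a : A) : A ⥤ ModuleCat k :=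
  coyoneda.obj (op a) ⋙ ModuleCat.free k


/-! `β` is the right Kan extension along the inclusion `M(A) ⥤ A`. Its value at `a` is computed by
the free Yoneda lemma `Hom(P_a, G) ≅ G(a)` together with the `k`-linear hom-equivalence of
`α ⊣ β`. Since `M(A)` has all the objects of `A`, restriction `α` is faithful, and the unit of an
adjunction with a faithful left adjoint is a monomorphism. -/

namespace CategoryTheory

instance Functor.whiskeringLeft_obj_linear (R : Type*) [Semiring R] {C D E : Type*} [Category* C]
    [Category* D] [Category* E] [Preadditive E] [CategoryTheory.Linear R E] (F : C ⥤ D) :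
    ((Functor.whiskeringLeft C D E).obj F).Linear R where

lemma Functor.whiskeringLeft_obj_faithful {C D E : Type*} [Category* C] [Category* D]
    [Category* E] (F : C ⥤ D) [F.EssSurj] : ((Functor.whiskeringLeft C D E).obj F).Faithful where
  map_injective {G H} η ε h := by
    ext d
    let e := F.objObjPreimageIso d
    rw [← cancel_epi (G.map e.hom), η.naturality, ε.naturality]
    exact congrArg (fun θ => θ.app (F.objPreimage d) ≫ H.map e.hom) h

def Adjunction.homLinearEquiv (R : Type*) [Semiring R] {C D : Type*} [Category* C] [Category* D]
    [Preadditive C] [Preadditive D] [CategoryTheory.Linear R C] [CategoryTheory.Linear R D]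
    {F : C ⥤ D} {G : D ⥤ C} (adj : F ⊣ G) [F.Additive] [F.Linear R] (X : C) (Y : D) :
    (F.obj X ⟶ Y) ≃ₗ[R] (X ⟶ G.obj Y) :=
  { adj.homAddEquiv X Y with
    map_smul' r f := by
      show adj.homEquiv X Y (r • f) = r • adj.homEquiv X Y f
      apply (adj.homEquiv X Y).symm.injective
      rw [Equiv.symm_apply_apply, homEquiv_counit, F.map_smul, Linear.smul_comp,
        ← homEquiv_counit, Equiv.symm_apply_apply] }

end CategoryTheory

instance (A : Type*) [Category A] : (MA.incl A).EssSurj :=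
  Functor.essSurj_of_surj Function.surjective_id

def Pa.homLinearEquiv (k : Type) [CommRing k] {A : Type} [SmallCategory A] (a : A)
    (G : A ⥤ ModuleCat k) : (Pa k a ⟶ G) ≃ₗ[k] G.obj a :=
  { (((ModuleCat.adj k).whiskerRight A).homEquiv _ _).trans coyonedaEquiv with
    map_add' _ _ := rfl
    map_smul' _ _ := rfl }

theorem stmt13_general (k : Type) [CommRing k] (A : Type) [SmallCategory A] :
    ∃ (β : (MA A ⥤ ModuleCat k) ⥤ (A ⥤ ModuleCat k)) (adj : alpha A k ⊣ β),
      (∀ (X : MA A ⥤ ModuleCat k) (a : A),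
        Nonempty (((β.obj X).obj a) ≃ₗ[k] ((alpha A k).obj (Pa k a) ⟶ X))) ∧
      (∀ F : A ⥤ ModuleCat k, Mono (adj.unit.app F)) := by
  let adj : alpha A k ⊣ (MA.incl A).ran := (MA.incl A).ranAdjunction (ModuleCat k)
  have : (alpha A k).Faithful := Functor.whiskeringLeft_obj_faithful _
  have : (alpha A k).Additive := inferInstanceAs ((Functor.whiskeringLeft _ _ _).obj _).Additive
  have : (alpha A k).Linear k := Functor.whiskeringLeft_obj_linear k _
  exact ⟨_, adj, fun X a => ⟨(Pa.homLinearEquiv k a _).symm ≪≫ₗ (adj.homLinearEquiv k _ X).symm⟩,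
    fun F => inferInstance⟩

/-- The restriction `α` to split monomorphisms has a right adjoint `β` given by
`β(X)(a) = Hom(α P_a, X)`, and the unit of the adjunction is a monomorphism. -/
theorem stmt13 (k : Type) [CommRing k] (A : Type) [SmallCategory A] [Preadditive A]
    [HasFiniteBiproducts A] :
    ∃ (β : (MA A ⥤ ModuleCat k) ⥤ (A ⥤ ModuleCat k)) (adj : alpha A k ⊣ β),
      (∀ (X : MA A ⥤ ModuleCat k) (a : A),
        Nonempty (((β.obj X).obj a) ≃ₗ[k] ((alpha A k).obj (Pa k a) ⟶ X))) ∧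
      (∀ F : A ⥤ ModuleCat k, Mono (adj.unit.app F)) :=
  stmt13_general k A

end
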